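/- arXiv:1606.09166 — 3 statements merged into one kernel-verified Lean document; each statement's English description precedes it below -/
import Mathlib

section
/- For the metric g = ε(e^{2t} dx² + e^{-2t} dy²) + μ dt² on ℝ³, the Ricci tensor with respect to the coordinate basis is the constant matrix diag(0, 0, -2); in particular it is degenerate at every point. -/
open Real

noncomputable def pd {n : ℕ} (i : Fin n) (f : (Fin n → ℝ) → ℝ) (p : Fin n → ℝ) : ℝ :=
  fderiv ℝ f p (Pi.single i 1)

noncomputable def g3 (ε μ : ℝ) (p : Fin 3 → ℝ) : Matrix (Fin 3) (Fin 3) ℝ :=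
  Matrix.diagonal ![ε * exp (2 * p 2), ε * exp (-2 * p 2), μ]

noncomputable def g3Inv (ε μ : ℝ) (p : Fin 3 → ℝ) : Matrix (Fin 3) (Fin 3) ℝ :=
  Matrix.diagonal ![ε * exp (-2 * p 2), ε * exp (2 * p 2), μ⁻¹]

/-- Christoffel symbols of the Levi-Civita connection. -/
noncomputable def Γ3 (ε μ : ℝ) (k i j : Fin 3) (p : Fin 3 → ℝ) : ℝ :=
  (1/2) * ∑ l, g3Inv ε μ p k l *
    (pd i (fun q => g3 ε μ q j l) p + pd j (fun q => g3 ε μ q i l) p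
      - pd l (fun q => g3 ε μ q i j) p)

/-- Ricci tensor ρᵢⱼ = ∂ₖΓᵏᵢⱼ - ∂ⱼΓᵏᵢₖ + ΓᵏₖₗΓˡᵢⱼ - ΓᵏⱼₗΓˡᵢₖ. -/
noncomputable def Ric3 (ε μ : ℝ) (p : Fin 3 → ℝ) : Matrix (Fin 3) (Fin 3) ℝ :=
  Matrix.of fun i j =>
    (∑ k, pd k (Γ3 ε μ k i j) p) - (∑ k, pd j (Γ3 ε μ k i k) p)
      + (∑ k, ∑ l, Γ3 ε μ k k l p * Γ3 ε μ l i j p)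
      - (∑ k, ∑ l, Γ3 ε μ k j l p * Γ3 ε μ l i k p)

/-!
The metric depends on `t` alone, so only `∂ₜ` survives and the Christoffel symbols can be listed
by hand: with `ε² = 1` the nonzero ones are `Γˣₓₜ = 1`, `Γʸᵧₜ = -1`, `Γᵗₓₓ = -(ε/μ) e^{2t}` and
`Γᵗᵧᵧ = (ε/μ) e^{-2t}`. Since `Γˣₓₜ + Γʸᵧₜ = 0`, the quadratic terms with a contracted pair vanish,
`ρₓₓ = ∂ₜΓᵗₓₓ - 2 Γˣₓₜ Γᵗₓₓ = 0` (likewise `ρᵧᵧ`), and `ρₜₜ = -(Γˣₓₜ)² - (Γʸᵧₜ)² = -2`.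
-/

lemma pd_const {n : ℕ} (c : ℝ) (i : Fin n) (p : Fin n → ℝ) : pd i (fun _ => c) p = 0 := by
  simp [pd]

lemma pd_const_mul_exp {n : ℕ} (c a : ℝ) (i m : Fin n) (p : Fin n → ℝ) :
    pd i (fun q => c * exp (a * q m)) p = if i = m then c * a * exp (a * p m) else 0 := by
  have h := (((hasFDerivAt_apply m p).const_mul a).exp).const_mul c
  rw [pd, h.fderiv]
  by_cases him : i = m
  · subst him
    simp
    ring
  · simp [him, Ne.symm him]

/-- `g3Inv` inverts `g3` only when `ε * ε = 1`; the table holds for every `ε`. -/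
noncomputable def christoffel (ε μ : ℝ) : Fin 3 → Fin 3 → Fin 3 → (Fin 3 → ℝ) → ℝ
  | 0, 0, 2 | 0, 2, 0 => fun _ => ε * ε
  | 1, 1, 2 | 1, 2, 1 => fun _ => -(ε * ε)
  | 2, 0, 0 => fun q => -(ε / μ) * exp (2 * q 2)
  | 2, 1, 1 => fun q => ε / μ * exp (-2 * q 2)
  | _, _, _ => fun _ => 0

lemma Γ3_eq_christoffel (ε μ : ℝ) (k i j : Fin 3) : Γ3 ε μ k i j = christoffel ε μ k i j := by
  funext p
  -- `-neg_mul` keeps `exp (-2 * q 2)` in the shape matched by `pd_const_mul_exp`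
  fin_cases k <;> fin_cases i <;> fin_cases j <;>
    simp [Γ3, christoffel, g3, g3Inv, Fin.sum_univ_three, pd_const_mul_exp, pd_const, -neg_mul] <;>
    (simp only [neg_mul, exp_neg]; field_simp)

lemma Ric3_eq_diagonal (ε μ : ℝ) (hε : ε * ε = 1) (p : Fin 3 → ℝ) :
    Ric3 ε μ p = Matrix.diagonal ![0, 0, -2] := by
  ext i j
  -- `christoffel` must only be unfolded once all its indices are numerals
  fin_cases i <;> fin_cases j <;>
    simp only [Fin.zero_eta, Fin.mk_one, Fin.reduceFinMk] <;>
    simp only [Ric3, Matrix.of_apply, Fin.sum_univ_three, Γ3_eq_christoffel] <;>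
    simp only [christoffel, pd_const_mul_exp, pd_const] <;>
    simp [hε] <;>
    ring

theorem ricci_3d_general (ε μ : ℝ) (hε : ε = 1 ∨ ε = -1) :
    ∀ p : Fin 3 → ℝ,
      Ric3 ε μ p = Matrix.diagonal ![0, 0, -2] ∧ (Ric3 ε μ p).det = 0 := by
  intro p
  have hε_sq : ε * ε = 1 := by rcases hε with rfl | rfl <;> norm_num
  rw [Ric3_eq_diagonal ε μ hε_sq p]
  exact ⟨rfl, by simp [Matrix.det_diagonal, Fin.prod_univ_three]⟩

/-- The Ricci tensor of the 3D generalized symmetric metric is the constant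
matrix diag(0,0,-2); in particular it is degenerate at every point. -/
theorem ricci_3d (ε μ : ℝ) (hε : ε = 1 ∨ ε = -1) (hμ : μ ≠ 0) :
    ∀ p : Fin 3 → ℝ,
      Ric3 ε μ p = Matrix.diagonal ![0, 0, -2] ∧ (Ric3 ε μ p).det = 0 :=
  ricci_3d_general ε μ hε
end

section
/- Suppose smooth functions X¹, X², X³, X⁴ on ℝ⁴ satisfy the three equations e^{-x₁}∂₃(X¹+2X²) = 0, e^{-x₂}∂₄(2X¹+X²) = 0, and e^{-x₂}∂₃(2X¹+X²) + e^{-x₁}∂₄(X¹+2X²) = 0. Then there exist smooth functions A, B¹, B² of (x₁,x₂) such that X¹ = -(2/3)(e^{x₁}x₄ + 2e^{x₂}x₃)A - (1/3)B¹ + (2/3)B² and X² = (2/3)(2e^{x₁}x₄ + e^{x₂}x₃)A + (2/3)B¹ - (1/3)B². -/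
open Real

namespace SolAux

variable {n : ℕ}

lemma hasDerivAt_update (f : (Fin n → ℝ) → ℝ) (hf : Differentiable ℝ f)
    (i : Fin n) (p : Fin n → ℝ) (s : ℝ) :
    HasDerivAt (fun t => f (Function.update p i t)) (pd i f (Function.update p i s)) s := by
  have hline : HasDerivAt (fun t : ℝ => Function.update p i t) (Pi.single i 1) s := by
    have he : (fun t : ℝ => Function.update p i t)
        = fun t => Function.update p i 0 + t • Pi.single i 1 := by
      funext t; funext k
      by_cases hk : k = i
      · subst hk; simp
      · simp [Function.update_of_ne hk, Pi.single_eq_of_ne hk]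
    rw [he]
    simpa using (((hasDerivAt_id s).smul_const (Pi.single i 1 : Fin n → ℝ)).const_add
      (Function.update p i 0))
  exact (hf.differentiableAt.hasFDerivAt).comp_hasDerivAt s hline

lemma update_eq_of_pd_zero (f : (Fin n → ℝ) → ℝ) (hf : Differentiable ℝ f) (i : Fin n)
    (h : ∀ p, pd i f p = 0) (p : Fin n → ℝ) (t : ℝ) :
    f (Function.update p i t) = f p := by
  have hd : ∀ s : ℝ, HasDerivAt (fun t => f (Function.update p i t)) 0 s := by
    intro s
    simpa [h] using hasDerivAt_update f hf i p s
  have hc := is_const_of_deriv_eq_zero (f := fun t => f (Function.update p i t))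
    (fun s => (hd s).differentiableAt) (fun s => (hd s).deriv) t (p i)
  simpa using hc

lemma update_eq_linear (f : (Fin n → ℝ) → ℝ) (hf : Differentiable ℝ f) (i : Fin n)
    (p : Fin n → ℝ) (c : ℝ) (h : ∀ t : ℝ, pd i f (Function.update p i t) = c) (t : ℝ) :
    f (Function.update p i t) = f (Function.update p i 0) + c * t := by
  have hd : ∀ s : ℝ, HasDerivAt (fun u => f (Function.update p i u) - c * u) 0 s := by
    intro s
    have h1 : HasDerivAt (fun u => f (Function.update p i u) - c * u)
        (pd i f (Function.update p i s) - c * 1) s :=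
      (hasDerivAt_update f hf i p s).sub ((hasDerivAt_id s).const_mul c)
    simpa [h s] using h1
  have hc := is_const_of_deriv_eq_zero (f := fun u => f (Function.update p i u) - c * u)
    (fun s => (hd s).differentiableAt) (fun s => (hd s).deriv) t 0
  simp at hc
  linarith

lemma pd_update_eq (f : (Fin n → ℝ) → ℝ) (hf : ContDiff ℝ (⊤ : ℕ∞) f) (i j : Fin n) (hij : j ≠ i)
    (h : ∀ p, pd i f p = 0) (p : Fin n → ℝ) (t : ℝ) :
    pd j f (Function.update p i t) = pd j f p := by
  set v : Fin n → ℝ := Pi.single i 1 with hv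
  set L : (Fin n → ℝ) →L[ℝ] (Fin n → ℝ) :=
    ContinuousLinearMap.id ℝ _ - (ContinuousLinearMap.proj i).smulRight v with hL
  have hφ : (fun q : Fin n → ℝ => Function.update q i t) = fun q => L q + t • v := by
    funext q k
    by_cases hk : k = i
    · subst hk; simp [hL, hv]
    · simp [hL, hv, Function.update_of_ne hk, Pi.single_eq_of_ne hk]
  have hcomp : (f ∘ fun q : Fin n → ℝ => Function.update q i t) = f := by
    funext q
    exact update_eq_of_pd_zero f (hf.differentiable (by simp)) i h q t
  have hLq : HasFDerivAt (fun q : Fin n → ℝ => Function.update q i t) L p := by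
    rw [hφ]
    exact L.hasFDerivAt.add_const (t • v)
  have hcd : HasFDerivAt (f ∘ fun q : Fin n → ℝ => Function.update q i t)
      ((fderiv ℝ f (Function.update p i t)).comp L) p :=
    ((hf.differentiable (by simp)) (Function.update p i t)).hasFDerivAt.comp p hLq
  rw [hcomp] at hcd
  have hfd : fderiv ℝ f p = (fderiv ℝ f (Function.update p i t)).comp L := hcd.fderiv
  have hLv : L (Pi.single j 1) = Pi.single j 1 := by
    simp [hL, hv]
    exact Pi.single_eq_of_ne (M := fun _ : Fin n => ℝ) hij.symm 1
  simp only [pd, hfd, ContinuousLinearMap.comp_apply, hLv]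

end SolAux

/-- From equations (viii), (x), (ix) of the type B soliton system it follows
that X¹ and X² have the stated form in terms of functions A, B¹, B² of
(x₁,x₂). -/
theorem soliton_typeB_eqs_viii_ix_x
    (X₁ X₂ X₃ X₄ : (Fin 4 → ℝ) → ℝ)
    (h₁ : ContDiff ℝ (⊤ : ℕ∞) X₁) (h₂ : ContDiff ℝ (⊤ : ℕ∞) X₂)
    (h₃ : ContDiff ℝ (⊤ : ℕ∞) X₃) (h₄ : ContDiff ℝ (⊤ : ℕ∞) X₄)
    (hviii : ∀ p : Fin 4 → ℝ, exp (-p 0) * pd 2 (fun q => X₁ q + 2 * X₂ q) p = 0)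
    (hx : ∀ p : Fin 4 → ℝ, exp (-p 1) * pd 3 (fun q => 2 * X₁ q + X₂ q) p = 0)
    (hix : ∀ p : Fin 4 → ℝ,
      exp (-p 1) * pd 2 (fun q => 2 * X₁ q + X₂ q) p
        + exp (-p 0) * pd 3 (fun q => X₁ q + 2 * X₂ q) p = 0) :
    ∃ A B₁ B₂ : ℝ → ℝ → ℝ,
      ContDiff ℝ (⊤ : ℕ∞) (fun z : ℝ × ℝ => A z.1 z.2) ∧
      ContDiff ℝ (⊤ : ℕ∞) (fun z : ℝ × ℝ => B₁ z.1 z.2) ∧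
      ContDiff ℝ (⊤ : ℕ∞) (fun z : ℝ × ℝ => B₂ z.1 z.2) ∧
      ∀ p : Fin 4 → ℝ,
        X₁ p = -(2/3) * (exp (p 0) * p 3 + 2 * exp (p 1) * p 2) * A (p 0) (p 1)
          - (1/3) * B₁ (p 0) (p 1) + (2/3) * B₂ (p 0) (p 1) ∧
        X₂ p = (2/3) * (2 * exp (p 0) * p 3 + exp (p 1) * p 2) * A (p 0) (p 1)
          + (2/3) * B₁ (p 0) (p 1) - (1/3) * B₂ (p 0) (p 1) := by

  classical
  set U : (Fin 4 → ℝ) → ℝ := fun q => X₁ q + 2 * X₂ q with hUdef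
  set V : (Fin 4 → ℝ) → ℝ := fun q => 2 * X₁ q + X₂ q with hVdef
  have hU : ContDiff ℝ (⊤ : ℕ∞) U := h₁.add (contDiff_const.mul h₂)
  have hV : ContDiff ℝ (⊤ : ℕ∞) V := (contDiff_const.mul h₁).add h₂
  have hUd : Differentiable ℝ U := hU.differentiable (by simp)
  have hVd : Differentiable ℝ V := hV.differentiable (by simp)
  have hU2 : ∀ p, pd 2 U p = 0 := fun p =>
    (mul_eq_zero.mp (hviii p)).resolve_left (exp_ne_zero _)
  have hV3 : ∀ p, pd 3 V p = 0 := fun p =>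
    (mul_eq_zero.mp (hx p)).resolve_left (exp_ne_zero _)
  -- relate pd 3 U and pd 2 V
  have hform : ∀ r : Fin 4 → ℝ, pd 3 U r = - exp (r 0 - r 1) * pd 2 V r := by
    intro r
    have h := hix r
    have e1 : exp (r 0) * exp (-r 0) = 1 := by rw [← exp_add]; simp
    have e2 : exp (r 0) * exp (-r 1) = exp (r 0 - r 1) := by rw [← exp_add]; ring_nf
    have h2 := congrArg (fun z => exp (r 0) * z) h
    simp only [mul_add, ← mul_assoc, e1, e2, one_mul, mul_zero] at h2
    linarith
  -- pd 2 V is independent of coordinate 3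
  have hV2ind : ∀ (q : Fin 4 → ℝ) (t : ℝ), pd 2 V (Function.update q 3 t) = pd 2 V q :=
    fun q t => SolAux.pd_update_eq V hV 3 2 (by decide) hV3 q t
  -- pd 3 U is independent of coordinate 2
  have hU3ind2 : ∀ (q : Fin 4 → ℝ) (t : ℝ), pd 3 U (Function.update q 2 t) = pd 3 U q :=
    fun q t => SolAux.pd_update_eq U hU 2 3 (by decide) hU2 q t
  -- pd 3 U is independent of coordinate 3
  have hU3ind3 : ∀ (q : Fin 4 → ℝ) (t : ℝ), pd 3 U (Function.update q 3 t) = pd 3 U q := by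
    intro q t
    have c0 : (Function.update q 3 t) 0 = q 0 := by simp [Function.update]
    have c1 : (Function.update q 3 t) 1 = q 1 := by simp [Function.update]
    rw [hform, hform q, c0, c1, hV2ind q t]
  set A : ℝ → ℝ → ℝ := fun a b => (1/2) * exp (-a) * pd 3 U ![a, b, 0, 0] with hAdef
  set B₁ : ℝ → ℝ → ℝ := fun a b => U ![a, b, 0, 0] with hB1def
  set B₂ : ℝ → ℝ → ℝ := fun a b => V ![a, b, 0, 0] with hB2def
  have hpt : ∀ p : Fin 4 → ℝ,
      Function.update (Function.update p 3 0) 2 0 = ![p 0, p 1, 0, 0] := by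
    intro p; funext k; fin_cases k <;> simp [Function.update]
  -- key formula for pd 3 U
  have C1 : ∀ p : Fin 4 → ℝ, pd 3 U p = 2 * A (p 0) (p 1) * exp (p 0) := by
    intro p
    have s1 : pd 3 U p = pd 3 U ![p 0, p 1, 0, 0] := by
      rw [← hpt p, hU3ind2, hU3ind3]
    rw [s1]
    simp only [hAdef]
    have he : exp (p 0) * exp (-p 0) = 1 := by rw [← exp_add]; simp
    linear_combination (- pd 3 U ![p 0, p 1, 0, 0]) * he
  have C2 : ∀ p : Fin 4 → ℝ, pd 2 V p = -2 * A (p 0) (p 1) * exp (p 1) := by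
    intro p
    have h2 := hix p
    rw [C1 p] at h2
    have e4 : exp (-p 0) * exp (p 0) = 1 := by rw [← exp_add]; simp
    have e5 : exp (p 1) * exp (-p 1) = 1 := by rw [← exp_add]; simp
    have h3 := congrArg (fun z => exp (p 1) * z) h2
    simp only [mul_add, mul_zero] at h3
    linear_combination h3 - pd 2 V p * e5 - 2 * A (p 0) (p 1) * exp (p 1) * e4
  -- integrate U in x₄
  have CU : ∀ p : Fin 4 → ℝ, U p = B₁ (p 0) (p 1) + 2 * A (p 0) (p 1) * exp (p 0) * p 3 := by
    intro p
    have hc : ∀ t : ℝ, pd 3 U (Function.update p 3 t) = 2 * A (p 0) (p 1) * exp (p 0) := by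
      intro t
      rw [C1]
      simp [Function.update]
    have hlin := SolAux.update_eq_linear U hUd 3 p _ hc (p 3)
    rw [Function.update_eq_self] at hlin
    have h0 : U (Function.update p 3 0) = B₁ (p 0) (p 1) := by
      have := SolAux.update_eq_of_pd_zero U hUd 2 hU2 (Function.update p 3 0) 0
      rw [hpt p] at this
      rw [← this, hB1def]
    rw [h0] at hlin
    exact hlin
  -- integrate V in x₃
  have CV : ∀ p : Fin 4 → ℝ, V p = B₂ (p 0) (p 1) - 2 * A (p 0) (p 1) * exp (p 1) * p 2 := by
    intro p
    have hc : ∀ t : ℝ, pd 2 V (Function.update p 2 t) = -2 * A (p 0) (p 1) * exp (p 1) := by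
      intro t
      rw [C2]
      simp [Function.update]
    have hlin := SolAux.update_eq_linear V hVd 2 p _ hc (p 2)
    rw [Function.update_eq_self] at hlin
    have h0 : V (Function.update p 2 0) = B₂ (p 0) (p 1) := by
      have h3 := SolAux.update_eq_of_pd_zero V hVd 3 hV3 (Function.update p 2 0) 0
      have hco : Function.update (Function.update p 2 0) 3 0 = ![p 0, p 1, 0, 0] := by
        funext k; fin_cases k <;> simp [Function.update]
      rw [hco] at h3
      rw [← h3, hB2def]
    rw [h0] at hlin
    linarith
  -- smoothness
  have hE : ContDiff ℝ (⊤ : ℕ∞) (fun z : ℝ × ℝ => (![z.1, z.2, 0, 0] : Fin 4 → ℝ)) := by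
    apply contDiff_pi.2
    intro i
    fin_cases i <;> simp <;>
      first
        | exact contDiff_fst
        | exact contDiff_snd
        | exact contDiff_const
  have hpd3U : ContDiff ℝ (⊤ : ℕ∞) (fun p : Fin 4 → ℝ => pd 3 U p) :=
    (hU.fderiv_right (by simp)).clm_apply contDiff_const
  have hA : ContDiff ℝ (⊤ : ℕ∞) (fun z : ℝ × ℝ => A z.1 z.2) := by
    have : ContDiff ℝ (⊤ : ℕ∞) (fun z : ℝ × ℝ =>
        (1/2 : ℝ) * exp (-z.1) * pd 3 U ![z.1, z.2, 0, 0]) :=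
      ((contDiff_const.mul (Real.contDiff_exp.comp contDiff_fst.neg))).mul (hpd3U.comp hE)
    exact this
  have hB₁ : ContDiff ℝ (⊤ : ℕ∞) (fun z : ℝ × ℝ => B₁ z.1 z.2) := hU.comp hE
  have hB₂ : ContDiff ℝ (⊤ : ℕ∞) (fun z : ℝ × ℝ => B₂ z.1 z.2) := hV.comp hE
  refine ⟨A, B₁, B₂, hA, hB₁, hB₂, ?_⟩
  intro p
  have hu := CU p
  have hv := CV p
  rw [hUdef] at hu
  rw [hVdef] at hv
  simp only [] at hu hv
  constructor
  · linear_combination (2 * hv - hu) / 3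
  · linear_combination (2 * hu - hv) / 3
end

section
/- Suppose smooth functions B¹, B² on ℝ² each decompose as B¹(x₁,x₂) = P¹(x₁) + Q¹(x₂) and B²(x₁,x₂) = P²(x₁) + Q²(x₂) and satisfy the six PDEs: (i) ∂₁²B¹ - ∂₁B¹ + (2/3)∂₂B¹ - (2/3)∂₁B² = 0; (ii) ∂₂∂₁B¹ + (2/3)∂₁B¹ - (2/3)∂₁B² - (1/3)∂₂B² = 0; (iii) ∂₂²B¹ + (2/3)∂₁B¹ + (1/3)∂₂B¹ - (4/3)∂₂B² = 0; (iv) ∂₁²B² + (2/3)∂₂B² + (1/3)∂₁B² - (4/3)∂₁B¹ = 0; (v) ∂₂∂₁B² + (2/3)∂₂B² - (1/3)∂₁B¹ - (2/3)∂₂B¹ = 0; (vi) ∂₂²B² + (2/3)∂₁B² - (2/3)∂₂B² - (2/3)∂₂B¹ = 0. Then B¹ and B² are constant functions. -/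
open Real

/-- Partial derivative in the first variable. -/
noncomputable def p1 (f : ℝ → ℝ → ℝ) (x y : ℝ) : ℝ := deriv (fun t => f t y) x

/-- Partial derivative in the second variable. -/
noncomputable def p2 (f : ℝ → ℝ → ℝ) (x y : ℝ) : ℝ := deriv (fun t => f x t) y

/-- Separable solutions B¹ = P¹(x₁)+Q¹(x₂), B² = P²(x₁)+Q²(x₂) of the six PDEs
(i)-(vi) arising from the type B Ricci soliton system are constant. -/
theorem separable_system_constant (B₁ B₂ : ℝ → ℝ → ℝ)
    (hB₁ : ContDiff ℝ (⊤ : ℕ∞) (fun z : ℝ × ℝ => B₁ z.1 z.2))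
    (hB₂ : ContDiff ℝ (⊤ : ℕ∞) (fun z : ℝ × ℝ => B₂ z.1 z.2))
    (hsep₁ : ∃ P Q : ℝ → ℝ, ∀ x y : ℝ, B₁ x y = P x + Q y)
    (hsep₂ : ∃ P Q : ℝ → ℝ, ∀ x y : ℝ, B₂ x y = P x + Q y)
    (hi : ∀ x y : ℝ, p1 (p1 B₁) x y - p1 B₁ x y + (2/3) * p2 B₁ x y
      - (2/3) * p1 B₂ x y = 0)
    (hii : ∀ x y : ℝ, p2 (p1 B₁) x y + (2/3) * p1 B₁ x y - (2/3) * p1 B₂ x y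
      - (1/3) * p2 B₂ x y = 0)
    (hiii : ∀ x y : ℝ, p2 (p2 B₁) x y + (2/3) * p1 B₁ x y + (1/3) * p2 B₁ x y
      - (4/3) * p2 B₂ x y = 0)
    (hiv : ∀ x y : ℝ, p1 (p1 B₂) x y + (2/3) * p2 B₂ x y + (1/3) * p1 B₂ x y
      - (4/3) * p1 B₁ x y = 0)
    (hv : ∀ x y : ℝ, p2 (p1 B₂) x y + (2/3) * p2 B₂ x y - (1/3) * p1 B₁ x y
      - (2/3) * p2 B₁ x y = 0)
    (hvi : ∀ x y : ℝ, p2 (p2 B₂) x y + (2/3) * p1 B₂ x y - (2/3) * p2 B₂ x y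
      - (2/3) * p2 B₁ x y = 0) :
    ∃ c₁ c₂ : ℝ, (∀ x y : ℝ, B₁ x y = c₁) ∧ (∀ x y : ℝ, B₂ x y = c₂) := by
  obtain ⟨P₁, Q₁, hPQ₁⟩ := hsep₁
  obtain ⟨P₂, Q₂, hPQ₂⟩ := hsep₂
  -- first partials only depend on one variable
  have e11 : ∀ x y : ℝ, p1 B₁ x y = deriv P₁ x := by
    intro x y
    simp only [p1, hPQ₁]
    exact deriv_add_const _
  have e21 : ∀ x y : ℝ, p2 B₁ x y = deriv Q₁ y := by
    intro x y
    simp only [p2, hPQ₁]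
    exact deriv_const_add _
  have e12 : ∀ x y : ℝ, p1 B₂ x y = deriv P₂ x := by
    intro x y
    simp only [p1, hPQ₂]
    exact deriv_add_const _
  have e22 : ∀ x y : ℝ, p2 B₂ x y = deriv Q₂ y := by
    intro x y
    simp only [p2, hPQ₂]
    exact deriv_const_add _
  -- mixed partials vanish
  have m1 : ∀ x y : ℝ, p2 (p1 B₁) x y = 0 := by
    intro x y
    have h : (fun t => p1 B₁ x t) = fun _ => deriv P₁ x := funext (e11 x)
    have h2 : p2 (p1 B₁) x y = deriv (fun t => p1 B₁ x t) y := rfl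
    rw [h2, h, deriv_const]
  have m2 : ∀ x y : ℝ, p2 (p1 B₂) x y = 0 := by
    intro x y
    have h : (fun t => p1 B₂ x t) = fun _ => deriv P₂ x := funext (e12 x)
    have h2 : p2 (p1 B₂) x y = deriv (fun t => p1 B₂ x t) y := rfl
    rw [h2, h, deriv_const]
  -- the first partials are constant
  have cP₁ : ∀ x : ℝ, deriv P₁ x = deriv P₁ 0 := by
    intro x
    have h1 := hv x 0
    have h2 := hv 0 0
    rw [m2, e22, e11, e21] at h1 h2
    linarith
  have cQ₂ : ∀ y : ℝ, deriv Q₂ y = deriv Q₂ 0 := by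
    intro y
    have h1 := hii 0 y
    have h2 := hii 0 0
    rw [m1, e11, e12, e22] at h1 h2
    linarith
  have cP₂ : ∀ x : ℝ, deriv P₂ x = deriv P₂ 0 := by
    intro x
    have h1 := hii x 0
    have h2 := hii 0 0
    rw [m1, e11, e12, e22] at h1 h2
    have := cP₁ x
    linarith
  have cQ₁ : ∀ y : ℝ, deriv Q₁ y = deriv Q₁ 0 := by
    intro y
    have h1 := hv 0 y
    have h2 := hv 0 0
    rw [m2, e22, e11, e21] at h1 h2
    have := cQ₂ y
    linarith
  -- second (pure) partials vanish
  have s11 : p1 (p1 B₁) 0 0 = 0 := by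
    have h : (fun t => p1 B₁ t 0) = fun _ => deriv P₁ 0 := by
      funext t; rw [e11, cP₁]
    have h2 : p1 (p1 B₁) 0 0 = deriv (fun t => p1 B₁ t 0) 0 := rfl
    rw [h2, h, deriv_const]
  have s21 : p2 (p2 B₁) 0 0 = 0 := by
    have h : (fun t => p2 B₁ 0 t) = fun _ => deriv Q₁ 0 := by
      funext t; rw [e21, cQ₁]
    have h2 : p2 (p2 B₁) 0 0 = deriv (fun t => p2 B₁ 0 t) 0 := rfl
    rw [h2, h, deriv_const]
  have s12 : p1 (p1 B₂) 0 0 = 0 := by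
    have h : (fun t => p1 B₂ t 0) = fun _ => deriv P₂ 0 := by
      funext t; rw [e12, cP₂]
    have h2 : p1 (p1 B₂) 0 0 = deriv (fun t => p1 B₂ t 0) 0 := rfl
    rw [h2, h, deriv_const]
  -- linear system at the origin
  have h1 := hi 0 0
  have h2 := hii 0 0
  have h3 := hiii 0 0
  have h4 := hiv 0 0
  have h5 := hv 0 0
  rw [s11, e11, e21, e12] at h1
  rw [m1, e11, e12, e22] at h2
  rw [s21, e11, e21, e22] at h3
  rw [s12, e22, e12, e11] at h4
  rw [m2, e22, e11, e21] at h5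
  have ha : deriv P₁ 0 = 0 := by linarith
  have hb : deriv Q₁ 0 = 0 := by linarith
  have hc : deriv P₂ 0 = 0 := by linarith
  have hd : deriv Q₂ 0 = 0 := by linarith
  -- sections of B are constant
  have d1x : Differentiable ℝ (fun x : ℝ => B₁ x 0) :=
    (hB₁.comp (contDiff_id.prodMk contDiff_const)).differentiable (by simp)
  have d1y : Differentiable ℝ (fun y : ℝ => B₁ 0 y) :=
    (hB₁.comp (contDiff_const.prodMk contDiff_id)).differentiable (by simp)
  have d2x : Differentiable ℝ (fun x : ℝ => B₂ x 0) :=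
    (hB₂.comp (contDiff_id.prodMk contDiff_const)).differentiable (by simp)
  have d2y : Differentiable ℝ (fun y : ℝ => B₂ 0 y) :=
    (hB₂.comp (contDiff_const.prodMk contDiff_id)).differentiable (by simp)
  have k1x : ∀ x : ℝ, B₁ x 0 = B₁ 0 0 := by
    intro x
    apply is_const_of_deriv_eq_zero d1x
    intro t
    have : deriv (fun x : ℝ => B₁ x 0) t = p1 B₁ t 0 := rfl
    rw [this, e11, cP₁, ha]
  have k1y : ∀ y : ℝ, B₁ 0 y = B₁ 0 0 := by
    intro y
    apply is_const_of_deriv_eq_zero d1y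
    intro t
    have : deriv (fun y : ℝ => B₁ 0 y) t = p2 B₁ 0 t := rfl
    rw [this, e21, cQ₁, hb]
  have k2x : ∀ x : ℝ, B₂ x 0 = B₂ 0 0 := by
    intro x
    apply is_const_of_deriv_eq_zero d2x
    intro t
    have : deriv (fun x : ℝ => B₂ x 0) t = p1 B₂ t 0 := rfl
    rw [this, e12, cP₂, hc]
  have k2y : ∀ y : ℝ, B₂ 0 y = B₂ 0 0 := by
    intro y
    apply is_const_of_deriv_eq_zero d2y
    intro t
    have : deriv (fun y : ℝ => B₂ 0 y) t = p2 B₂ 0 t := rfl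
    rw [this, e22, cQ₂, hd]
  refine ⟨B₁ 0 0, B₂ 0 0, ?_, ?_⟩
  · intro x y
    have h1 := hPQ₁ x y
    have h2 := hPQ₁ x 0
    have h3 := hPQ₁ 0 y
    have h4 := hPQ₁ 0 0
    have h5 := k1x x
    have h6 := k1y y
    linarith
  · intro x y
    have h1 := hPQ₂ x y
    have h2 := hPQ₂ x 0
    have h3 := hPQ₂ 0 y
    have h4 := hPQ₂ 0 0
    have h5 := k2x x
    have h6 := k2y y
    linarith
end
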